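/- The inequality 'integral_{D(0,1)} |df/d\bar{z}|^2 + integral_{D(0,1)} V |f|^2 >= c * min{ integral_{D(0,1)} V, 1 } * integral_{D(0,1)} |f|^2 for all admissible f' fails for every constant c > 0: with V = indicator of D(0,1/2) and f_m(zeta) = zeta^m, one has df_m/d\bar{z} = 0, integral V is a fixed positive constant, and the ratio (integral_{D(0,1/2)} |zeta|^{2m}) / (integral_{D(0,1)} |zeta|^{2m}) tends to 0 as m -> infinity (it is of order 4^{-m}). -/

import Mathlib

open MeasureTheory Metric

/-- The Wirtinger derivative `∂/∂ζ̄` of a function of one complex variable. -/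
noncomputable def dbar1 (f : ℂ → ℂ) (ζ : ℂ) : ℂ :=
  (1 / 2) * (fderiv ℝ f ζ 1 + Complex.I * fderiv ℝ f ζ Complex.I)

lemma dbar1_pow (m : ℕ) (ζ : ℂ) : dbar1 (fun ξ => ξ ^ m) ζ = 0 := by
  have hd : DifferentiableAt ℂ (fun ξ : ℂ => ξ ^ m) ζ := differentiableAt_pow m
  have hre : fderiv ℝ (fun ξ : ℂ => ξ ^ m) ζ
      = (fderiv ℂ (fun ξ : ℂ => ξ ^ m) ζ).restrictScalars ℝ := by
    exact hd.fderiv_restrictScalars ℝ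
  set L := fderiv ℂ (fun ξ : ℂ => ξ ^ m) ζ
  have hI : L Complex.I = Complex.I * L 1 := by
    have := L.map_smul Complex.I (1 : ℂ)
    simpa [smul_eq_mul] using this
  simp only [dbar1, hre, ContinuousLinearMap.coe_restrictScalars', hI]
  have : Complex.I * (Complex.I * L 1) = -L 1 := by
    rw [← mul_assoc, Complex.I_mul_I, neg_one_mul]
  rw [this]
  ring

lemma ball_pow_integral (r : ℝ) (hr : 0 < r) (k : ℕ) :
    ∫ ζ in ball (0:ℂ) r, ‖ζ‖ ^ k = 2 * Real.pi * (r ^ (k+2) / (k+2)) := by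
  have h1 : ∫ ζ in ball (0:ℂ) r, ‖ζ‖ ^ k
      = ∫ ζ : ℂ, Set.indicator (Set.Iio r) (fun y => y ^ k) ‖ζ‖ := by
    rw [← integral_indicator measurableSet_ball]
    congr 1
    ext ζ
    by_cases h : ζ ∈ ball (0:ℂ) r
    · rw [Set.indicator_of_mem h]
      exact (Set.indicator_of_mem (show ‖ζ‖ ∈ Set.Iio r from mem_ball_zero_iff.mp h)
        (fun y => y ^ k)).symm
    · rw [Set.indicator_of_notMem h, Set.indicator_of_notMem
        (by simpa [mem_ball_zero_iff] using h)]
  rw [h1, integral_fun_norm_addHaar volume (Set.indicator (Set.Iio r) (fun y => y ^ k))]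
  have hdim : Module.finrank ℝ ℂ = 2 := Complex.finrank_real_complex
  rw [hdim]
  have hvol : volume.real (ball (0:ℂ) 1) = Real.pi := by
    simp [Measure.real, Complex.volume_ball]
  rw [hvol]
  have h2 : ∫ y in Set.Ioi (0:ℝ), y ^ (2-1) • Set.indicator (Set.Iio r) (fun y => y ^ k) y
      = ∫ y in Set.Ioo (0:ℝ) r, y ^ (k+1) := by
    have : ∀ y : ℝ, y ^ (2-1) • Set.indicator (Set.Iio r) (fun y => y ^ k) y
        = Set.indicator (Set.Iio r) (fun y => y ^ (k+1)) y := by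
      intro y
      by_cases h : y ∈ Set.Iio r <;>
        simp [h, pow_succ, mul_comm]
    simp_rw [this]
    rw [integral_indicator measurableSet_Iio, Measure.restrict_restrict measurableSet_Iio,
      Set.Iio_inter_Ioi]
  rw [h2]
  have h3 : ∫ y in Set.Ioo (0:ℝ) r, y ^ (k+1) = r ^ (k+2) / (k+2) := by
    rw [← integral_Ioc_eq_integral_Ioo, ← intervalIntegral.integral_of_le hr.le,
      integral_pow]
    push_cast
    ring
  rw [h3]
  simp only [nsmul_eq_mul, smul_eq_mul, Nat.cast_ofNat]
  ring

/-- The Fefferman–Phong-type strengthening of the holomorphic uncertainty principle fails: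
with `V` the indicator of `D(0,1/2)` and `f_m(ζ) = ζ^m`, for every `c > 0` the inequality
`∫ |∂f/∂ζ̄|² + ∫ V |f|² ≥ c · min{∫ V, 1} · ∫ |f|²` fails for some `m`; indeed the ratio
`(∫_{D(0,1/2)} |ζ|^{2m}) / (∫_{D(0,1)} |ζ|^{2m})` tends to `0` as `m → ∞`. -/
theorem fefferman_phong_fails :
    (∀ c : ℝ, 0 < c → ∃ m : ℕ,
      (∫ ζ in ball (0 : ℂ) 1, ‖dbar1 (fun ξ => ξ ^ m) ζ‖ ^ 2) +
          (∫ ζ in ball (0 : ℂ) 1,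
            Set.indicator (ball (0 : ℂ) (1 / 2)) (fun _ => (1 : ℝ)) ζ * ‖ζ ^ m‖ ^ 2) <
        c * min (∫ ζ in ball (0 : ℂ) 1,
            Set.indicator (ball (0 : ℂ) (1 / 2)) (fun _ => (1 : ℝ)) ζ) 1 *
          ∫ ζ in ball (0 : ℂ) 1, ‖ζ ^ m‖ ^ 2) ∧
    Filter.Tendsto
      (fun m : ℕ => (∫ ζ in ball (0 : ℂ) (1 / 2), ‖ζ‖ ^ (2 * m)) /
        ∫ ζ in ball (0 : ℂ) 1, ‖ζ‖ ^ (2 * m))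
      Filter.atTop (nhds 0) := by
  have e3 : (∫ ζ in ball (0 : ℂ) 1,
      Set.indicator (ball (0 : ℂ) (1 / 2)) (fun _ => (1 : ℝ)) ζ) = Real.pi / 4 := by
    rw [setIntegral_indicator measurableSet_ball,
      Set.inter_eq_self_of_subset_right (ball_subset_ball (by norm_num)),
      setIntegral_const, smul_eq_mul, mul_one]
    simp [Measure.real, Complex.volume_ball, ENNReal.toReal_mul, ← ENNReal.ofReal_pow]
    norm_num
    ring
  constructor
  · intro c hc
    obtain ⟨m, hm⟩ := exists_pow_lt_of_lt_one (mul_pos hc Real.pi_pos)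
      (by norm_num : (1/4 : ℝ) < 1)
    refine ⟨m, ?_⟩
    have e1 : (∫ ζ in ball (0 : ℂ) 1, ‖dbar1 (fun ξ => ξ ^ m) ζ‖ ^ 2) = 0 := by
      simp [dbar1_pow]
    have e2 : (∫ ζ in ball (0 : ℂ) 1,
        Set.indicator (ball (0 : ℂ) (1 / 2)) (fun _ => (1 : ℝ)) ζ * ‖ζ ^ m‖ ^ 2)
        = ∫ ζ in ball (0 : ℂ) (1/2), ‖ζ‖ ^ (2 * m) := by
      have key : ∀ ζ : ℂ, Set.indicator (ball (0 : ℂ) (1 / 2)) (fun _ => (1 : ℝ)) ζ * ‖ζ ^ m‖ ^ 2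
          = Set.indicator (ball (0 : ℂ) (1 / 2)) (fun ζ : ℂ => ‖ζ‖ ^ (2 * m)) ζ := by
        intro ζ
        rw [norm_pow, ← pow_mul, Nat.mul_comm]
        by_cases h : ζ ∈ ball (0 : ℂ) (1/2)
        · rw [Set.indicator_of_mem h, Set.indicator_of_mem h, one_mul]
        · rw [Set.indicator_of_notMem h, Set.indicator_of_notMem h, zero_mul]
      simp_rw [key]
      rw [setIntegral_indicator measurableSet_ball,
        Set.inter_eq_self_of_subset_right (ball_subset_ball (by norm_num))]
    have e4 : (∫ ζ in ball (0 : ℂ) 1, ‖ζ ^ m‖ ^ 2)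
        = ∫ ζ in ball (0 : ℂ) 1, ‖ζ‖ ^ (2 * m) := by
      congr 1
      ext ζ
      rw [norm_pow, ← pow_mul, Nat.mul_comm]
    rw [e1, e2, e3, e4, zero_add, ball_pow_integral _ (by norm_num) (2*m),
      ball_pow_integral _ one_pos (2*m),
      min_eq_left (by nlinarith [Real.pi_le_four] : Real.pi / 4 ≤ 1), one_pow]
    have hDpos : (0:ℝ) < (2*m + 2 : ℕ) := by positivity
    have hhalf : ((1:ℝ)/2) ^ (2*m+2) = (1/4 : ℝ) ^ m * (1/4) := by
      rw [show 2*m+2 = 2*(m+1) by ring, pow_mul]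
      norm_num [pow_succ]
    calc 2 * Real.pi * ((1/2 : ℝ) ^ (2*m+2) / (((2*m : ℕ) : ℝ) + 2))
        = (1/4 : ℝ) ^ m * (2 * Real.pi * (1/4) / (((2*m : ℕ) : ℝ) + 2)) := by rw [hhalf]; ring
      _ < (c * Real.pi) * (2 * Real.pi * (1/4) / (((2*m : ℕ) : ℝ) + 2)) := by
          exact mul_lt_mul_of_pos_right hm (by positivity)
      _ = c * (Real.pi / 4) * (2 * Real.pi * (1 / (((2*m : ℕ) : ℝ) + 2))) := by ring
  · have hval : ∀ m : ℕ, (∫ ζ in ball (0 : ℂ) (1 / 2), ‖ζ‖ ^ (2 * m)) /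
        (∫ ζ in ball (0 : ℂ) 1, ‖ζ‖ ^ (2 * m)) = (1/4 : ℝ) ^ (m+1) := by
      intro m
      rw [ball_pow_integral _ (by norm_num) (2*m), ball_pow_integral _ one_pos (2*m), one_pow]
      have hD : ((2*m + 2 : ℕ) : ℝ) ≠ 0 := by positivity
      have hhalf : ((1:ℝ)/2) ^ (2*m+2) = (1/4 : ℝ) ^ (m+1) := by
        rw [show 2*m+2 = 2*(m+1) by ring, pow_mul]
        norm_num
      rw [hhalf]
      have hD' : (((2*m : ℕ) : ℝ) + 2) ≠ 0 := by positivity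
      field_simp
    refine Filter.Tendsto.congr (fun m => (hval m).symm) ?_
    exact (tendsto_pow_atTop_nhds_zero_of_lt_one (by norm_num) (by norm_num)).comp
      (Filter.tendsto_add_atTop_nat 1)
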